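/- Let K be a number field, let f : P^1 → P^1 be a rational map of degree d ≥ 2 defined over K, let α ∈ P^1(K), and let m ≥ 2. Set U_m = {α} ∪ f^{−1}(α) ∪ f^{−2}(α) ∪ … ∪ f^{−(m−1)}(α), and assume U_m ⊆ P^1(K). If dim(G_{f^m,β}) exists and equals 0 for every β ∈ U_m, then dim(G_{f,α}) exists and equals 0. -/

import Mathlib

open scoped Classical

noncomputable section

/-! ### Minkowski dimension machinery for groups of automorphisms of rooted trees

A rooted tree is presented by its levels `V 0, V 1, V 2, …` (with `V 0` the root level)
together with parent maps `V (n+1) → V n`.  An automorphism is a family of permutations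
of the levels commuting with the parent maps; it is in particular determined by a point of
`∀ k, Equiv.Perm (V k)`.  The restriction `r_n σ` of `σ` to the height-`n` subtree is the
tuple `(σ 0, …, σ n)`, and the natural metric is
`d(σ,τ) = inf { d!^{-(dⁿ-1)/(d-1)} : r_n σ = r_n τ }`. -/

/-- The exponent `(dⁿ - 1)/(d - 1) = 1 + d + ⋯ + d^(n-1)`. -/
def scaleExp (d n : ℕ) : ℕ := ∑ i ∈ Finset.range n, d ^ i

/-- The scale `ε_n = d!^{-(dⁿ-1)/(d-1)}`, i.e. `1/|Aut(Tₙᶜᵒᵐ)|`. -/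
def treeScale (d n : ℕ) : ℝ := ((d.factorial : ℝ) ^ scaleExp d n)⁻¹

/-- Two families of level permutations restrict to the same automorphism of the
height-`n` subtree. -/
def AgreeUpTo {V : ℕ → Type*} (n : ℕ) (σ τ : ∀ k, Equiv.Perm (V k)) : Prop :=
  ∀ k, k ≤ n → σ k = τ k

/-- The natural metric on automorphisms of a rooted `d`-ary tree:
`d(σ,τ) = inf { d!^{-(dⁿ-1)/(d-1)} : σ and τ agree on the height-n subtree }`. -/
def treeDist {V : ℕ → Type*} (d : ℕ) (σ τ : ∀ k, Equiv.Perm (V k)) : ℝ :=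
  sInf {x : ℝ | ∃ n : ℕ, AgreeUpTo n σ τ ∧ x = treeScale d n}

/-- `N_{ε_n}(G)`: the least number of balls of radius `ε_n = treeScale d n` needed to
cover `G`. -/
def coverNum {V : ℕ → Type*} (d : ℕ) (G : Set (∀ k, Equiv.Perm (V k))) (n : ℕ) : ℕ :=
  sInf {m : ℕ | ∃ s : Finset (∀ k, Equiv.Perm (V k)), s.card = m ∧
    G ⊆ ⋃ σ ∈ s, {τ | treeDist d σ τ ≤ treeScale d n}}

/-- The lower Minkowski dimension `liminf_{ε → 0} log N_ε(G) / log (1/ε)` (computed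
along the scales `ε_n` of the metric). -/
def dimLower {V : ℕ → Type*} (d : ℕ) (G : Set (∀ k, Equiv.Perm (V k))) : ℝ :=
  Filter.liminf
    (fun n : ℕ => Real.log (coverNum d G n : ℝ) / Real.log (1 / treeScale d n)) Filter.atTop

/-- The upper Minkowski dimension `limsup_{ε → 0} log N_ε(G) / log (1/ε)` (computed
along the scales `ε_n` of the metric). -/
def dimUpper {V : ℕ → Type*} (d : ℕ) (G : Set (∀ k, Equiv.Perm (V k))) : ℝ :=
  Filter.limsup
    (fun n : ℕ => Real.log (coverNum d G n : ℝ) / Real.log (1 / treeScale d n)) Filter.atTop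

/-- The Minkowski dimension of `G` exists and equals `x`. -/
def HasDim {V : ℕ → Type*} (d : ℕ) (G : Set (∀ k, Equiv.Perm (V k))) (x : ℝ) : Prop :=
  dimLower d G = x ∧ dimUpper d G = x

/-- `G` is closed for the natural metric. -/
def IsDistClosed {V : ℕ → Type*} (d : ℕ) (G : Set (∀ k, Equiv.Perm (V k))) : Prop :=
  ∀ σ, (∀ ε : ℝ, 0 < ε → ∃ τ ∈ G, treeDist d σ τ ≤ ε) → σ ∈ G

/-- The closure of `G` for the natural metric. -/
def distClosure {V : ℕ → Type*} (d : ℕ) (G : Set (∀ k, Equiv.Perm (V k))) :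
    Set (∀ k, Equiv.Perm (V k)) :=
  {σ | ∀ ε : ℝ, 0 < ε → ∃ τ ∈ G, treeDist d σ τ ≤ ε}

/-- `|r_n(G)|`: the cardinality of the restriction of `G` to the height-`n` subtree. -/
def levelCard {V : ℕ → Type*} (G : Set (∀ k, Equiv.Perm (V k))) (n : ℕ) : ℕ :=
  Nat.card ((fun (σ : ∀ k, Equiv.Perm (V k)) (k : Fin (n + 1)) => σ k.1) '' G)

end
noncomputable section

/-- A fixed algebraic closure `K̄` of `K`. -/
abbrev Kbar (K : Type*) [Field K] : Type _ := AlgebraicClosure K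

/-- The level-`n` vertices of the preimage tree of `α` under `φ`: the set
`φ^{-n}(α)`. -/
abbrev preV {Pts : Type*} (φ : Pts → Pts) (α : Pts) (n : ℕ) : Type _ :=
  {β : Pts // φ^[n] β = α}

/-- The parent map of the preimage tree: a vertex `β ∈ φ^{-(n+1)}(α)` is joined to
`φ(β) ∈ φ^{-n}(α)`. -/
def preParent {Pts : Type*} (φ : Pts → Pts) (α : Pts) (n : ℕ)
    (β : preV φ α (n + 1)) : preV φ α n :=
  ⟨φ β.1, by have h := β.2; rwa [Function.iterate_succ_apply] at h⟩

/-- The image `G_{φ,α}` of the arboreal Galois representation attached to `(φ, α)` over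
the base field `L` (an intermediate field of `K̄/K`): the set of families of level
permutations of the preimage tree induced by elements of `Gal(K̄/L)`, acting on points
via `act`. -/
def arbGal {K : Type*} [Field K] {Pts : Type*}
    (act : (Kbar K ≃ₐ[K] Kbar K) → Pts → Pts) (L : IntermediateField K (Kbar K))
    (φ : Pts → Pts) (α : Pts) : Set (∀ n, Equiv.Perm (preV φ α n)) :=
  {g | ∃ σ : Kbar K ≃ₐ[K] Kbar K, (∀ x ∈ L, σ x = x) ∧
    ∀ (n : ℕ) (β : preV φ α n), (g n β : Pts) = act σ (β : Pts)}

end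
noncomputable section

/-- The projective line `ℙ¹(L) = L ∪ {∞}`, with `none` the point at infinity. -/
abbrev P1 (L : Type*) := Option L

/-- The action on `ℙ¹(A)` of the rational map `f = p/q` with coefficients in `K`,
for an extension field `A` of `K`.  At a finite point `x` the value is `p(x)/q(x)`
(`∞` when `q(x) = 0`), and the value at `∞` is governed by the degrees of `p` and
`q` and their leading coefficients. -/
def ratAct {K : Type*} [Field K] (p q : Polynomial K)
    (A : Type*) [Field A] [Algebra K A] : P1 A → P1 A
  | some x =>
      if Polynomial.aeval x q = 0 then none
      else some (Polynomial.aeval x p / Polynomial.aeval x q)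
  | none =>
      if q.natDegree < p.natDegree then none
      else if p.natDegree < q.natDegree then some 0
      else some (algebraMap K A (p.leadingCoeff / q.leadingCoeff))

/-- The natural action of `Gal(K̄/K)` on `ℙ¹(K̄)`. -/
def galP1 {K : Type*} [Field K] (σ : Kbar K ≃ₐ[K] Kbar K) : P1 (Kbar K) → P1 (Kbar K) :=
  Option.map σ

/-- The inclusion `ℙ¹(K) ⊆ ℙ¹(K̄)`. -/
def P1K {K : Type*} [Field K] : P1 K → P1 (Kbar K) :=
  Option.map (algebraMap K (Kbar K))

/-- The set of `L`-rational points of `ℙ¹(K̄)`, for an intermediate field `L` of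
`K̄/K`. -/
def P1Rat {K : Type*} [Field K] (L : IntermediateField K (Kbar K)) : Set (P1 (Kbar K)) :=
  {β | β = none ∨ ∃ x ∈ L, β = some x}

/-- The Möbius transformation of `ℙ¹(F)` attached to `(a b; c e) ∈ PGL₂(F)`. -/
def moebius {F : Type*} [Field F] (a b c e : F) : P1 F → P1 F
  | some x => if c * x + e = 0 then none else some ((a * x + b) / (c * x + e))
  | none => if c = 0 then none else some (a / c)

/-- The normalizing constant `C_D = log(D!)/(D-1)`. -/
def Cconst (D : ℕ) : ℝ := Real.log (D.factorial : ℝ) / ((D : ℝ) - 1)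

/-- The ramification multiplicity at a point `γ ∈ ℙ¹(A)` of the degree-`d` rational
map `f = p/q` with coefficients in `K ⊆ A`:  at a finite point `γ` with `f(γ) = c`
finite it is the order of vanishing of `p - c·q` at `γ`; the cases involving `∞` are
handled using `q` and degrees.  A point is critical when this is at least `2`. -/
def multAt {K : Type*} [Field K] (p q : Polynomial K)
    (A : Type*) [Field A] [Algebra K A] (d : ℕ) : P1 A → ℕ
  | some x =>
      match ratAct p q A (some x) with
      | some c => ((p.map (algebraMap K A)) -
          Polynomial.C c * (q.map (algebraMap K A))).rootMultiplicity x
      | none => (q.map (algebraMap K A)).rootMultiplicity x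
  | none =>
      match ratAct p q A none with
      | some c => d - ((p.map (algebraMap K A)) -
          Polynomial.C c * (q.map (algebraMap K A))).natDegree
      | none => d - q.natDegree

end

/-!
For any set `G` of tree automorphisms the covering number `N_{ε_n}(G)` equals the
number `|r_n(G)|` of restrictions of `G` to the height-`n` subtree, and
`log (1/ε_n) = (dⁿ - 1)/(d - 1) · log d!`.

A point `x ∈ f^{-k}(α)` sits at level `⌊k/m⌋` of the preimage tree of `f^m` rooted at
`f^{m⌊k/m⌋}(x) ∈ f^{-(k mod m)}(α) ⊆ U_m`. Since the points of `U_m` are `K`-rational, every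
Galois element preserves these trees, and its action on the first `n` levels of `T_{f,α}` is
determined by its actions on the first `⌊n/m⌋ + 1` levels of the trees `T_{f^m,β}`, `β ∈ U_m`.
Hence `log |r_n(G_{f,α})| ≤ ∑_β log |r_{⌊n/m⌋+1}(G_{f^m,β})|`, and the two scales
`log (1/ε)` involved are comparable up to a factor independent of `n`. So the dimension ratio of
`G_{f,α}` at level `n` is at most a constant times the sum of those of the `G_{f^m,β}`, which tend
to `0`: they are bounded, because a group acting on a `D`-ary tree has
`|r_j(G)| ≤ D^{D(D^j - 1)/(D - 1)}`.
-/

open Filter Topology Function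

section TreeMetric

variable {V : ℕ → Type*} {d : ℕ}

lemma scaleExp_succ (d n : ℕ) : scaleExp d (n + 1) = scaleExp d n + d ^ n :=
  Finset.sum_range_succ _ _

lemma log_one_div_treeScale (d n : ℕ) :
    Real.log (1 / treeScale d n) = scaleExp d n * Real.log d.factorial := by
  rw [treeScale, one_div, inv_inv, Real.log_pow]

lemma treeScale_pos (d n : ℕ) : 0 < treeScale d n :=
  inv_pos.2 (pow_pos (by exact_mod_cast d.factorial_pos) _)

lemma treeScale_strictAnti (hd : 2 ≤ d) : StrictAnti (treeScale d) := by
  have hexp : StrictMono (scaleExp d) := strictMono_nat_of_lt_succ fun n => by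
    rw [scaleExp_succ]
    exact Nat.lt_add_of_pos_right (by positivity)
  have hfact : (1 : ℝ) < d.factorial := by exact_mod_cast Nat.one_lt_factorial.2 hd
  exact fun a b hab =>
    inv_strictAnti₀ (pow_pos (one_pos.trans hfact) _) (pow_lt_pow_right₀ hfact (hexp hab))

def levelRestrict (n : ℕ) (σ : ∀ k, Equiv.Perm (V k)) (k : Fin (n + 1)) : Equiv.Perm (V k) := σ k

lemma levelCard_eq_card_image (G : Set (∀ k, Equiv.Perm (V k))) (n : ℕ) :
    levelCard G n = Nat.card (levelRestrict n '' G) := rfl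

lemma agreeUpTo_iff_levelRestrict_eq {n : ℕ} {σ τ : ∀ k, Equiv.Perm (V k)} :
    AgreeUpTo n σ τ ↔ levelRestrict n σ = levelRestrict n τ :=
  ⟨fun h => funext fun k => h k (Nat.lt_succ_iff.1 k.2),
    fun h k hk => congrFun h ⟨k, Nat.lt_succ_of_le hk⟩⟩

lemma AgreeUpTo.mono {n k : ℕ} {σ τ : ∀ k, Equiv.Perm (V k)} (h : AgreeUpTo n σ τ)
    (hk : k ≤ n) : AgreeUpTo k σ τ :=
  fun i hi => h i (hi.trans hk)

lemma agreeUpTo_zero [Subsingleton (V 0)] (σ τ : ∀ k, Equiv.Perm (V k)) : AgreeUpTo 0 σ τ := by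
  intro k hk
  obtain rfl := Nat.le_zero.1 hk
  exact Subsingleton.elim _ _

lemma treeDist_le_of_agreeUpTo {n : ℕ} {σ τ : ∀ k, Equiv.Perm (V k)} (h : AgreeUpTo n σ τ) :
    treeDist d σ τ ≤ treeScale d n :=
  csInf_le ⟨0, by rintro _ ⟨k, -, rfl⟩; exact (treeScale_pos d k).le⟩ ⟨n, h, rfl⟩

lemma agreeUpTo_of_treeDist_le [Subsingleton (V 0)] (hd : 2 ≤ d) {j : ℕ}
    {σ τ : ∀ k, Equiv.Perm (V k)} (h : treeDist d σ τ ≤ treeScale d j) : AgreeUpTo j σ τ := by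
  by_contra hj
  have hlt : ∀ n, AgreeUpTo n σ τ → n < j := fun n hn =>
    lt_of_not_ge fun hjn => hj (hn.mono hjn)
  set S : Set ℝ := {x | ∃ n, AgreeUpTo n σ τ ∧ x = treeScale d n}
  -- Only the finitely many levels below `j` contribute to the infimum, so it is attained.
  have hfin : S.Finite := ((Set.finite_Iio j).image (treeScale d)).subset <| by
    rintro _ ⟨n, hn, rfl⟩
    exact ⟨n, hlt n hn, rfl⟩
  obtain ⟨n, hn, hdist⟩ := Set.Nonempty.csInf_mem (s := S) ⟨_, 0, agreeUpTo_zero σ τ, rfl⟩ hfin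
  change sInf S ≤ _ at h
  exact (treeScale_strictAnti hd (hlt n hn)).not_ge (hdist ▸ h)

variable [∀ k, Finite (V k)]

lemma exists_cover_card_le_levelCard (G : Set (∀ k, Equiv.Perm (V k))) (n : ℕ) :
    ∃ s : Finset (∀ k, Equiv.Perm (V k)), s.card ≤ levelCard G n ∧
      G ⊆ ⋃ σ ∈ s, {τ | treeDist d σ τ ≤ treeScale d n} := by
  obtain ⟨u, -, hbij⟩ := Set.exists_subset_bijOn G (levelRestrict n)
  have hu : u.Finite := Set.Finite.of_finite_image (hbij.image_eq ▸ Set.toFinite _) hbij.injOn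
  refine ⟨hu.toFinset, ?_, fun g hg => ?_⟩
  · rw [levelCard_eq_card_image, ← hbij.image_eq, Nat.card_coe_set_eq,
      hbij.injOn.ncard_image, Set.ncard_eq_toFinset_card u hu]
  · obtain ⟨σ, hσ, hσg⟩ := hbij.surjOn ⟨g, hg, rfl⟩
    exact Set.mem_iUnion₂.2 ⟨σ, hu.mem_toFinset.2 hσ,
      treeDist_le_of_agreeUpTo (agreeUpTo_iff_levelRestrict_eq.2 hσg)⟩

lemma coverNum_eq_levelCard [Subsingleton (V 0)] (hd : 2 ≤ d) (G : Set (∀ k, Equiv.Perm (V k)))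
    (n : ℕ) : coverNum d G n = levelCard G n := by
  obtain ⟨s₀, hs₀, hcov₀⟩ := exists_cover_card_le_levelCard (d := d) G n
  set S : Set ℕ := {m | ∃ s : Finset (∀ k, Equiv.Perm (V k)),
    s.card = m ∧ G ⊆ ⋃ σ ∈ s, {τ | treeDist d σ τ ≤ treeScale d n}}
  obtain ⟨s, hs, hcov⟩ := Nat.sInf_mem (s := S) ⟨_, s₀, rfl, hcov₀⟩
  refine le_antisymm ((Nat.sInf_le (s := S) ⟨s₀, rfl, hcov₀⟩).trans hs₀) ?_
  have hsub : levelRestrict n '' G ⊆ levelRestrict n '' s := by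
    rintro _ ⟨g, hg, rfl⟩
    obtain ⟨σ, hσ, hdist⟩ := Set.mem_iUnion₂.1 (hcov hg)
    exact ⟨σ, hσ, agreeUpTo_iff_levelRestrict_eq.1 (agreeUpTo_of_treeDist_le hd hdist)⟩
  calc levelCard G n ≤ Nat.card (levelRestrict n '' (s : Set (∀ k, Equiv.Perm (V k)))) :=
        Nat.card_mono (Set.toFinite _) hsub
    _ ≤ Nat.card (s : Set (∀ k, Equiv.Perm (V k))) := Nat.card_image_le s.finite_toSet
    _ = coverNum d G n := by rw [Finset.coe_sort_coe, Nat.card_eq_finsetCard, hs]; rfl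

end TreeMetric

section Dimension

variable {V : ℕ → Type*}

noncomputable def dimRatio (d : ℕ) (G : Set (∀ k, Equiv.Perm (V k))) (n : ℕ) : ℝ :=
  Real.log (coverNum d G n) / Real.log (1 / treeScale d n)

lemma dimRatio_nonneg (d : ℕ) (G : Set (∀ k, Equiv.Perm (V k))) (n : ℕ) :
    0 ≤ dimRatio d G n :=
  div_nonneg (Real.log_natCast_nonneg _)
    (by rw [log_one_div_treeScale]; positivity)

lemma hasDim_zero_of_tendsto {d : ℕ} {G : Set (∀ k, Equiv.Perm (V k))}
    (h : Tendsto (dimRatio d G) atTop (𝓝 0)) : HasDim d G 0 :=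
  ⟨h.liminf_eq, h.limsup_eq⟩

/-- The bound `M` matters: the `limsup` of an unbounded sequence is the junk value `0`. -/
lemma HasDim.tendsto_dimRatio {d : ℕ} {G : Set (∀ k, Equiv.Perm (V k))} {M : ℝ}
    (h : HasDim d G 0) (hM : ∀ n, dimRatio d G n ≤ M) :
    Tendsto (dimRatio d G) atTop (𝓝 0) :=
  tendsto_of_liminf_eq_limsup h.1 h.2 (isBoundedUnder_of ⟨M, hM⟩)
    (isBoundedUnder_of ⟨0, dimRatio_nonneg d G⟩)

lemma log_factorial_pos {d : ℕ} (hd : 2 ≤ d) : 0 < Real.log d.factorial :=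
  Real.log_pos (by exact_mod_cast Nat.one_lt_factorial.2 hd)

lemma one_le_scaleExp (d : ℕ) {n : ℕ} (hn : 1 ≤ n) : 1 ≤ scaleExp d n :=
  Finset.single_le_sum (f := (d ^ ·)) (fun _ _ => Nat.zero_le _) (Finset.mem_range.2 hn)

lemma dimRatio_le_of_coverNum_le {D : ℕ} (hD : 2 ≤ D) {G : Set (∀ k, Equiv.Perm (V k))} {j : ℕ}
    (h : coverNum D G j ≤ D ^ (D * scaleExp D j)) :
    dimRatio D G j ≤ D * Real.log D / Real.log D.factorial := by
  have hlog := log_factorial_pos hD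
  rw [dimRatio, log_one_div_treeScale]
  refine div_le_of_le_mul₀ (by positivity)
    (div_nonneg (mul_nonneg (Nat.cast_nonneg _) (Real.log_natCast_nonneg _)) hlog.le) ?_
  calc Real.log (coverNum D G j) ≤ Real.log ((D : ℝ) ^ (D * scaleExp D j)) := by
        rcases (coverNum D G j).eq_zero_or_pos with h0 | hpos
        · rw [h0, Nat.cast_zero, Real.log_zero]
          exact Real.log_nonneg (one_le_pow₀ (by norm_cast; omega))
        · exact Real.log_le_log (by exact_mod_cast hpos) (by exact_mod_cast h)
    _ = D * Real.log D / Real.log D.factorial * (scaleExp D j * Real.log D.factorial) := by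
        rw [Real.log_pow]; push_cast; field_simp

lemma log_le_sum_log_of_le_prod {ι : Type*} (s : Finset ι) {N : ℕ} {b : ι → ℕ}
    (h : N ≤ ∏ i ∈ s, b i) : Real.log N ≤ ∑ i ∈ s, Real.log (b i) := by
  rcases N.eq_zero_or_pos with rfl | hN
  · simpa using Finset.sum_nonneg fun i _ => Real.log_natCast_nonneg (b i)
  · have hb : ∀ i ∈ s, (b i : ℝ) ≠ 0 := fun i hi => by
      exact_mod_cast Finset.prod_ne_zero_iff.1 (by omega) i hi
    rw [← Real.log_prod hb]
    exact Real.log_le_log (by exact_mod_cast hN) (by exact_mod_cast h)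

lemma scaleExp_pow_le {d m n : ℕ} (hd : 2 ≤ d) (hm : 0 < m) (hn : 1 ≤ n) :
    scaleExp (d ^ m) (n / m + 1) ≤ d ^ (m + 1) * scaleExp d n := by
  have hD : 2 ≤ d ^ m := hd.trans (Nat.le_self_pow hm.ne' d)
  have hdiv := Nat.mul_div_le n m
  calc scaleExp (d ^ m) (n / m + 1) ≤ (d ^ m) ^ (n / m + 1) :=
        (Nat.geomSum_lt hD fun k hk => Finset.mem_range.1 hk).le
    _ = d ^ (m * (n / m) + m) := by rw [← pow_mul, mul_add, mul_one]
    _ ≤ d ^ (m + 1 + (n - 1)) := Nat.pow_le_pow_right (by omega) (by omega)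
    _ = d ^ (m + 1) * d ^ (n - 1) := pow_add _ _ _
    _ ≤ d ^ (m + 1) * scaleExp d n := Nat.mul_le_mul_left _
        (Finset.single_le_sum (f := (d ^ ·)) (fun _ _ => Nat.zero_le _)
          (Finset.mem_range.2 (by omega)))

lemma log_one_div_treeScale_pos {d n : ℕ} (hd : 2 ≤ d) (hn : 1 ≤ n) :
    0 < Real.log (1 / treeScale d n) := by
  rw [log_one_div_treeScale]
  exact mul_pos (by exact_mod_cast one_le_scaleExp d hn) (log_factorial_pos hd)

lemma log_one_div_treeScale_pow_le {d m n : ℕ} (hd : 2 ≤ d) (hm : 0 < m) (hn : 1 ≤ n) :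
    Real.log (1 / treeScale (d ^ m) (n / m + 1)) ≤
      d ^ (m + 1) * Real.log (d ^ m).factorial / Real.log d.factorial *
        Real.log (1 / treeScale d n) := by
  have h : (scaleExp (d ^ m) (n / m + 1) : ℝ) ≤ d ^ (m + 1) * scaleExp d n := by
    exact_mod_cast scaleExp_pow_le hd hm hn
  have hlogd := log_factorial_pos hd
  rw [log_one_div_treeScale, log_one_div_treeScale]
  calc (scaleExp (d ^ m) (n / m + 1) : ℝ) * Real.log (d ^ m).factorial
      ≤ d ^ (m + 1) * scaleExp d n * Real.log (d ^ m).factorial :=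
        mul_le_mul_of_nonneg_right h (Real.log_natCast_nonneg _)
    _ = _ := by field_simp

lemma dimRatio_le_mul_sum [Subsingleton (V 0)] [∀ k, Finite (V k)] {ι : Type*} [Fintype ι]
    {W : ι → ℕ → Type*} [∀ i, Subsingleton (W i 0)] [∀ i k, Finite (W i k)] {d m n : ℕ}
    (hd : 2 ≤ d) (hm : 0 < m) (hn : 1 ≤ n) {G : Set (∀ k, Equiv.Perm (V k))}
    {H : ∀ i, Set (∀ k, Equiv.Perm (W i k))}
    (hcard : levelCard G n ≤ ∏ i, levelCard (H i) (n / m + 1)) :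
    dimRatio d G n ≤ d ^ (m + 1) * Real.log (d ^ m).factorial / Real.log d.factorial *
      ∑ i, dimRatio (d ^ m) (H i) (n / m + 1) := by
  set D := d ^ m
  set J := n / m + 1
  set C := d ^ (m + 1) * Real.log D.factorial / Real.log d.factorial
  have hD : 2 ≤ D := hd.trans (Nat.le_self_pow hm.ne' d)
  have hL' : 0 < Real.log (1 / treeScale D J) :=
    log_one_div_treeScale_pos hD (Nat.le_add_left 1 _)
  rw [dimRatio, div_le_iff₀ (log_one_div_treeScale_pos hd hn)]
  calc Real.log (coverNum d G n) ≤ ∑ i, Real.log (coverNum D (H i) J) := by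
        refine log_le_sum_log_of_le_prod _ ?_
        simpa only [coverNum_eq_levelCard hd, coverNum_eq_levelCard hD] using hcard
    _ = ∑ i, dimRatio D (H i) J * Real.log (1 / treeScale D J) := by
        simp only [dimRatio, div_mul_cancel₀ _ hL'.ne']
    _ ≤ ∑ i, dimRatio D (H i) J * (C * Real.log (1 / treeScale d n)) :=
        Finset.sum_le_sum fun i _ => mul_le_mul_of_nonneg_left
          (log_one_div_treeScale_pow_le hd hm hn) (dimRatio_nonneg _ _ _)
    _ = (C * ∑ i, dimRatio D (H i) J) * Real.log (1 / treeScale d n) := by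
        rw [Finset.mul_sum, Finset.sum_mul]
        exact Finset.sum_congr rfl fun i _ => by ring

end Dimension

section Counting

lemma Nat.card_image_le_of_factor {α β γ : Type*} {s : Set α} {f : α → β} {u : α → γ}
    (hs : (u '' s).Finite) (h : ∀ a ∈ s, ∀ b ∈ s, u a = u b → f a = f b) :
    Nat.card (f '' s) ≤ Nat.card (u '' s) := by
  rcases isEmpty_or_nonempty α with hα | hα
  · simp [Set.eq_empty_of_isEmpty s]
  have hpre : ∀ b ∈ f '' s, ∃ a ∈ s, f a = b := fun b hb => hb
  choose! g hgs hgf using hpre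
  rw [Nat.card_coe_set_eq, Nat.card_coe_set_eq]
  refine Set.ncard_le_ncard_of_injOn (u ∘ g) (fun b hb => ⟨g b, hgs b hb, rfl⟩) ?_ hs
  intro b hb b' hb' hbb
  rw [← hgf b hb, ← hgf b' hb']
  exact h _ (hgs b hb) _ (hgs b' hb') hbb

lemma Nat.card_range_le_prod_of_factor {Γ Z ι : Type*} [Fintype ι] {Y : ι → Type*}
    (F : Γ → Z) (ρ : ∀ i, Γ → Y i) [∀ i, Finite (Set.range (ρ i))]
    (h : ∀ σ τ, (∀ i, ρ i σ = ρ i τ) → F σ = F τ) :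
    Nat.card (Set.range F) ≤ ∏ i, Nat.card (Set.range (ρ i)) := by
  let u : Γ → ∀ i, Set.range (ρ i) := fun σ i => ⟨ρ i σ, σ, rfl⟩
  calc Nat.card (Set.range F) ≤ Nat.card (Set.range u) := by
        rw [← Set.image_univ, ← Set.image_univ]
        exact Nat.card_image_le_of_factor (Set.toFinite _) fun σ _ τ _ hστ =>
          h σ τ fun i => congrArg Subtype.val (congrFun hστ i)
    _ ≤ Nat.card (∀ i, Set.range (ρ i)) := Finite.card_subtype_le _
    _ = ∏ i, Nat.card (Set.range (ρ i)) := Nat.card_pi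

lemma exists_injective_prod_fin_of_card_fiber_le {X Y : Type*} [Finite X] (π : X → Y) {D : ℕ}
    (hπ : ∀ y, Nat.card {x // π x = y} ≤ D) :
    ∃ c : X → Fin D, Injective fun x => (π x, c x) := by
  have he : ∀ y, Nonempty ({x // π x = y} ↪ Fin D) := fun y => by
    have := Fintype.ofFinite {x // π x = y}
    exact Function.Embedding.nonempty_of_card_le (by simpa [Nat.card_eq_fintype_card] using hπ y)
  let g : X → Σ _ : Y, Fin D :=
    Sigma.map id (fun y => (he y).some) ∘ (Equiv.sigmaFiberEquiv π).symm
  have hg : Injective g := (injective_id.sigma_map fun y => (he y).some.injective).comp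
    (Equiv.sigmaFiberEquiv π).symm.injective
  exact ⟨fun x => (g x).2, (Equiv.sigmaEquivProd Y (Fin D)).injective.comp hg⟩

end Counting

section RootedTree

variable {V : ℕ → Type*} [∀ k, Finite (V k)]

lemma card_level_le_pow [Subsingleton (V 0)] (π : ∀ k, V (k + 1) → V k) {D : ℕ}
    (hπ : ∀ k y, Nat.card {x // π k x = y} ≤ D) (k : ℕ) : Nat.card (V k) ≤ D ^ k := by
  induction k with
  | zero => simpa using Finite.card_le_one_iff_subsingleton.2 inferInstance
  | succ k ih =>
    obtain ⟨c, hc⟩ := exists_injective_prod_fin_of_card_fiber_le (π k) (hπ k)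
    calc Nat.card (V (k + 1)) ≤ Nat.card (V k × Fin D) := Nat.card_le_card_of_injective _ hc
      _ = Nat.card (V k) * D := by simp [Nat.card_prod]
      _ ≤ D ^ (k + 1) := by rw [pow_succ]; exact Nat.mul_le_mul_right D ih

lemma levelCard_zero_le_one [Subsingleton (V 0)] (G : Set (∀ k, Equiv.Perm (V k))) :
    levelCard G 0 ≤ 1 := by
  have : (levelRestrict 0 '' G).Subsingleton := by
    rintro _ ⟨g, -, rfl⟩ _ ⟨g', -, rfl⟩
    exact agreeUpTo_iff_levelRestrict_eq.1 (agreeUpTo_zero g g')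
  exact Finite.card_le_one_iff_subsingleton.2 this.coe_sort

lemma levelCard_succ_le_of_map_parent (π : ∀ k, V (k + 1) → V k) {D : ℕ}
    (hπ : ∀ k y, Nat.card {x // π k x = y} ≤ D) (G : Set (∀ k, Equiv.Perm (V k)))
    (hG : ∀ g ∈ G, ∀ k x, π k (g (k + 1) x) = g k (π k x)) (j : ℕ) :
    levelCard G (j + 1) ≤ levelCard G j * D ^ Nat.card (V (j + 1)) := by
  obtain ⟨c, hc⟩ := exists_injective_prod_fin_of_card_fiber_le (π j) (hπ j)
  -- A level-`(j+1)` permutation is pinned down by the level-`j` one and, at each vertex,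
  -- the code of the image among the children of the image of its parent.
  let u := fun g : ∀ k, Equiv.Perm (V k) => (levelRestrict j g, fun x => c (g (j + 1) x))
  have hfac : ∀ a ∈ G, ∀ b ∈ G, u a = u b →
      levelRestrict (j + 1) a = levelRestrict (j + 1) b := by
    intro a ha b hb hab
    have hj := agreeUpTo_iff_levelRestrict_eq.2 (congrArg Prod.fst hab)
    refine agreeUpTo_iff_levelRestrict_eq.1 fun k hk => ?_
    rcases Nat.lt_succ_iff_lt_or_eq.1 (Nat.lt_succ_of_le hk) with hk | rfl
    · exact hj k (Nat.lt_succ_iff.1 hk)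
    · refine Equiv.ext fun x => hc (Prod.ext ?_ (congrFun (congrArg Prod.snd hab) x))
      simp only [hG a ha, hG b hb, hj j le_rfl]
  calc levelCard G (j + 1) ≤ Nat.card (u '' G) :=
        Nat.card_image_le_of_factor (Set.toFinite _) hfac
    _ ≤ Nat.card ((levelRestrict j '' G) ×ˢ (Set.univ : Set (V (j + 1) → Fin D))) :=
        Nat.card_mono (Set.toFinite _) (by rintro _ ⟨g, hg, rfl⟩; exact ⟨⟨g, hg, rfl⟩, trivial⟩)
    _ = levelCard G j * D ^ Nat.card (V (j + 1)) := by
        rw [Nat.card_coe_set_eq, Set.ncard_prod, Set.ncard_univ, Nat.card_fun,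
          Nat.card_eq_fintype_card (α := Fin D), Fintype.card_fin, levelCard_eq_card_image,
          Nat.card_coe_set_eq]

lemma levelCard_le_of_map_parent [Subsingleton (V 0)] (π : ∀ k, V (k + 1) → V k) {D : ℕ}
    (hD : 0 < D) (hπ : ∀ k y, Nat.card {x // π k x = y} ≤ D) (G : Set (∀ k, Equiv.Perm (V k)))
    (hG : ∀ g ∈ G, ∀ k x, π k (g (k + 1) x) = g k (π k x)) (j : ℕ) :
    levelCard G j ≤ D ^ (D * scaleExp D j) := by
  induction j with
  | zero => simpa [scaleExp] using levelCard_zero_le_one G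
  | succ j ih =>
    calc levelCard G (j + 1) ≤ levelCard G j * D ^ Nat.card (V (j + 1)) :=
          levelCard_succ_le_of_map_parent π hπ G hG j
      _ ≤ D ^ (D * scaleExp D j) * D ^ D ^ (j + 1) :=
          Nat.mul_le_mul ih (Nat.pow_le_pow_right hD (card_level_le_pow π hπ (j + 1)))
      _ = D ^ (D * scaleExp D (j + 1)) := by rw [scaleExp_succ]; ring

end RootedTree

section PreimageTree

variable {X : Type*} {φ : X → X} {d : ℕ}

instance (φ : X → X) (r : X) : Subsingleton (preV φ r 0) :=
  ⟨fun a b => Subtype.ext (a.2.trans b.2.symm)⟩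

lemma encard_preimage_le (hφ : ∀ y, {x | φ x = y}.encard ≤ d) {S : Set X} (hS : S.Finite) :
    (φ ⁻¹' S).encard ≤ S.encard * d := by
  induction S, hS using Set.Finite.induction_on with
  | empty => simp
  | @insert a S ha _ ih =>
    calc (φ ⁻¹' insert a S).encard ≤ {x | φ x = a}.encard + (φ ⁻¹' S).encard := by
          rw [Set.insert_eq, Set.preimage_union]; exact Set.encard_union_le _ _
      _ ≤ d + S.encard * d := add_le_add (hφ a) ih
      _ = (insert a S).encard * d := by
          rw [Set.encard_insert_of_notMem ha, add_mul, one_mul, add_comm]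

lemma encard_iterate_fiber_le (hφ : ∀ y, {x | φ x = y}.encard ≤ d) (n : ℕ) (y : X) :
    {x | φ^[n] x = y}.encard ≤ (d ^ n : ℕ) := by
  induction n with
  | zero => simp
  | succ n ih =>
    have hpre : {x | φ^[n + 1] x = y} = φ ⁻¹' {x | φ^[n] x = y} := by
      ext x; simp [iterate_succ_apply]
    rw [hpre, pow_succ, Nat.cast_mul]
    exact (encard_preimage_le hφ (Set.finite_of_encard_le_coe ih)).trans (by gcongr)

lemma finite_preV (hφ : ∀ y, {x | φ x = y}.encard ≤ d) (r : X) (n : ℕ) : Finite (preV φ r n) :=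
  (Set.finite_of_encard_le_coe (encard_iterate_fiber_le hφ n r)).to_subtype

lemma card_preParent_fiber_le (hφ : ∀ y, {x | φ x = y}.encard ≤ d) (r : X) (k : ℕ)
    (y : preV φ r k) : Nat.card {x // preParent φ r k x = y} ≤ d := by
  have : Finite {z // φ z = y.1} := (Set.finite_of_encard_le_coe (hφ y.1)).to_subtype
  calc Nat.card {x // preParent φ r k x = y} ≤ Nat.card {z // φ z = y.1} :=
        Nat.card_le_card_of_injective (fun x => ⟨x.1.1, congrArg Subtype.val x.2⟩) fun a b h =>
          Subtype.ext (Subtype.ext (Subtype.mk.inj h))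
    _ = {z | φ z = y.1}.ncard := Nat.card_coe_set_eq _
    _ ≤ d := (Set.encard_le_coe_iff_finite_ncard_le.1 (hφ y.1)).2

lemma finite_setOf_exists_iterate_eq (hφ : ∀ y, {x | φ x = y}.encard ≤ d) (a : X) (m : ℕ) :
    {x | ∃ ℓ < m, φ^[ℓ] x = a}.Finite := by
  have hunion : {x | ∃ ℓ < m, φ^[ℓ] x = a} = ⋃ ℓ ∈ Set.Iio m, {x | φ^[ℓ] x = a} := by
    ext; simp
  rw [hunion]
  exact (Set.finite_Iio m).biUnion fun ℓ _ =>
    Set.finite_of_encard_le_coe (encard_iterate_fiber_le hφ ℓ a)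

end PreimageTree

section GaloisAction

variable {K : Type*} [Field K] {φ : P1 (Kbar K) → P1 (Kbar K)} {r : P1 (Kbar K)}

lemma galP1_symm_galP1 (σ : Kbar K ≃ₐ[K] Kbar K) (x : P1 (Kbar K)) :
    galP1 σ.symm (galP1 σ x) = x := by
  cases x <;> simp [galP1]

lemma galP1_galP1_symm (σ : Kbar K ≃ₐ[K] Kbar K) (x : P1 (Kbar K)) :
    galP1 σ (galP1 σ.symm x) = x := by
  cases x <;> simp [galP1]

noncomputable def treePerm (hφ : ∀ σ, Function.Commute (galP1 σ) φ)
    (hr : ∀ σ : Kbar K ≃ₐ[K] Kbar K, galP1 σ r = r) (σ : Kbar K ≃ₐ[K] Kbar K) (n : ℕ) :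
    Equiv.Perm (preV φ r n) where
  toFun x := ⟨galP1 σ x, by rw [← (hφ σ).iterate_right n x.1, x.2, hr]⟩
  invFun x := ⟨galP1 σ.symm x, by rw [← (hφ σ.symm).iterate_right n x.1, x.2, hr]⟩
  left_inv x := Subtype.ext (galP1_symm_galP1 σ x)
  right_inv x := Subtype.ext (galP1_galP1_symm σ x)

lemma arbGal_eq_range (hφ : ∀ σ, Function.Commute (galP1 σ) φ)
    (hr : ∀ σ : Kbar K ≃ₐ[K] Kbar K, galP1 σ r = r) :
    arbGal galP1 ⊥ φ r = Set.range fun σ n => treePerm hφ hr σ n := by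
  ext g
  constructor
  · rintro ⟨σ, -, hσ⟩
    exact ⟨σ, funext fun n => Equiv.ext fun x => Subtype.ext (hσ n x).symm⟩
  · rintro ⟨σ, rfl⟩
    refine ⟨σ, fun x hx => ?_, fun n x => rfl⟩
    obtain ⟨y, rfl⟩ := IntermediateField.mem_bot.1 hx
    exact σ.commutes y

lemma preParent_apply_of_mem_arbGal (hφ : ∀ σ, Function.Commute (galP1 σ) φ)
    {g : ∀ n, Equiv.Perm (preV φ r n)} (hg : g ∈ arbGal galP1 ⊥ φ r) (k : ℕ)
    (x : preV φ r (k + 1)) :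
    preParent φ r k (g (k + 1) x) = g k (preParent φ r k x) := by
  obtain ⟨σ, -, hσ⟩ := hg
  exact Subtype.ext (by simp only [preParent, hσ]; exact (hφ σ x.1).symm)

lemma levelCard_arbGal_le_prod (hφ : ∀ σ, Function.Commute (galP1 σ) φ) {a : P1 (Kbar K)}
    {m n J : ℕ} (hm : 0 < m) (hn : n ≤ m * J) {ι : Type*} [Fintype ι] (β : ι → P1 (Kbar K))
    (hβ : ∀ i σ, galP1 σ (β i) = β i) (hcover : ∀ ℓ < m, ∀ x, φ^[ℓ] x = a → ∃ i, β i = x)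
    [∀ i k, Finite (preV (φ^[m]) (β i) k)] :
    levelCard (arbGal galP1 ⊥ φ a) n ≤ ∏ i, levelCard (arbGal galP1 ⊥ (φ^[m]) (β i)) J := by
  obtain ⟨i₀, rfl⟩ := hcover 0 hm a rfl
  have hφm : ∀ σ, Function.Commute (galP1 σ) (φ^[m]) := fun σ => (hφ σ).iterate_right m
  simp only [levelCard_eq_card_image, arbGal_eq_range hφ (hβ i₀), arbGal_eq_range hφm (hβ _),
    ← Set.range_comp]
  refine Nat.card_range_le_prod_of_factor _ _ fun σ τ h => funext fun k => ?_
  refine Equiv.ext fun x => Subtype.ext ?_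
  -- A vertex `x` at level `k` of the `φ`-tree sits at level `k / m` of the `φ^m`-tree
  -- rooted at `φ^[m * (k / m)] x`, which lies in `φ^{-(k % m)}(a)`.
  obtain ⟨i, hi⟩ := hcover (k % m) (Nat.mod_lt _ hm) (φ^[m * (k / m)] x)
    (by rw [← iterate_add_apply, Nat.mod_add_div]; exact x.2)
  have hk : k / m < J + 1 :=
    Nat.lt_succ_of_le (Nat.div_le_of_le_mul ((Nat.lt_succ_iff.1 k.2).trans hn))
  have hx : (φ^[m])^[k / m] x = β i := by rw [← iterate_mul, hi]
  exact (congrArg Subtype.val (Equiv.congr_fun (congrFun (h i) ⟨k / m, hk⟩) ⟨x, hx⟩) :)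

lemma HasDim.tendsto_dimRatio_arbGal {D : ℕ} (hD : 2 ≤ D) (hφ : ∀ σ, Function.Commute (galP1 σ) φ)
    (hfib : ∀ y, {x | φ x = y}.encard ≤ D) (h : HasDim D (arbGal galP1 ⊥ φ r) 0) :
    Tendsto (dimRatio D (arbGal galP1 ⊥ φ r)) atTop (𝓝 0) := by
  have := finite_preV hfib r
  refine h.tendsto_dimRatio fun j => dimRatio_le_of_coverNum_le hD ?_
  rw [coverNum_eq_levelCard hD]
  exact levelCard_le_of_map_parent _ (by omega) (card_preParent_fiber_le hfib r) _
    (fun g hg => preParent_apply_of_mem_arbGal hφ hg) j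

end GaloisAction

section RationalMap

open Polynomial

variable {K : Type*} [Field K]

lemma galP1_commute_ratAct (p q : K[X]) (σ : Kbar K ≃ₐ[K] Kbar K) :
    Function.Commute (galP1 σ) (ratAct p q (Kbar K)) := by
  have hσ : ∀ (f : K[X]) (t : Kbar K), aeval (σ t) f = σ (aeval t f) := fun f t =>
    aeval_algHom_apply (σ : Kbar K →ₐ[K] Kbar K) t f
  rintro (_ | t)
  · simp only [galP1, ratAct]
    split_ifs <;> simp
  · simp only [galP1, ratAct, Option.map_some, hσ, map_eq_zero]
    split_ifs <;> simp [map_div₀]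

lemma galP1_eq_self_of_mem_P1Rat {β : P1 (Kbar K)} (hβ : β ∈ P1Rat (K := K) ⊥)
    (σ : Kbar K ≃ₐ[K] Kbar K) : galP1 σ β = β := by
  rcases hβ with rfl | ⟨x, hx, rfl⟩
  · rfl
  · obtain ⟨y, rfl⟩ := IntermediateField.mem_bot.1 hx
    simp [galP1]

lemma IsCoprime.map_algebraMap {p q : K[X]} (hf : IsCoprime p q) (A : Type*) [Field A]
    [Algebra K A] : IsCoprime (p.map (algebraMap K A)) (q.map (algebraMap K A)) := by
  simpa using hf.map (mapRingHom (algebraMap K A))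

variable {A : Type*} [Field A]

lemma encard_le_of_subset_roots {S : Set (P1 A)} {r : A[X]} (hr : r ≠ 0) {d : ℕ}
    (hrd : r.natDegree ≤ d) (hroot : ∀ t, some t ∈ S → r.eval t = 0)
    (hinf : none ∈ S → r.natDegree < d) : S.encard ≤ d := by
  set Z := {t | some t ∈ S}
  have hZ : Z.encard ≤ r.natDegree :=
    calc Z.encard ≤ (r.roots.toFinset : Set A).encard :=
          Set.encard_le_encard fun t ht => by simpa [hr] using hroot t ht
      _ = r.roots.toFinset.card := Set.encard_coe_eq_coe_finsetCard _
      _ ≤ r.natDegree := by exact_mod_cast (Multiset.toFinset_card_le _).trans (card_roots' r)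
  have hsome : (some '' Z).encard ≤ r.natDegree := by
    rwa [(Option.some_injective A).encard_image]
  by_cases hn : none ∈ S
  · have hS : S ⊆ insert none (some '' Z) := by
      rintro (_ | t) ht
      exacts [Set.mem_insert _ _, Set.mem_insert_of_mem _ ⟨t, ht, rfl⟩]
    calc S.encard ≤ (some '' Z).encard + 1 :=
          (Set.encard_le_encard hS).trans (Set.encard_insert_le _ _)
      _ ≤ (r.natDegree + 1 : ℕ) := by push_cast; gcongr
      _ ≤ d := by exact_mod_cast hinf hn
  · have hS : S ⊆ some '' Z := by
      rintro (_ | t) ht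
      exacts [absurd ht hn, ⟨t, ht, rfl⟩]
    exact (Set.encard_le_encard hS).trans (hsome.trans (by exact_mod_cast hrd))

variable [Algebra K A] {p q : K[X]} {d : ℕ}

lemma encard_ratAct_fiber_none_le (hd : 0 < d) (hf : IsCoprime p q)
    (hdeg : max p.natDegree q.natDegree = d) : {x : P1 A | ratAct p q A x = none}.encard ≤ d := by
  have hq : q.map (algebraMap K A) ≠ 0 := by
    intro h
    have hp := natDegree_eq_zero_of_isUnit (isCoprime_zero_right.1 (h ▸ hf.map_algebraMap A))
    rw [natDegree_map_eq_of_injective (algebraMap K A).injective] at hp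
    rw [Polynomial.map_eq_zero_iff (algebraMap K A).injective] at h
    simp [h, hp] at hdeg
    omega
  refine encard_le_of_subset_roots hq (by rw [natDegree_map]; omega) (fun t ht => ?_) fun h => ?_
  · simp only [Set.mem_ofPred_eq, ratAct] at ht
    split_ifs at ht with h0
    rwa [eval_map_algebraMap]
  · simp only [Set.mem_ofPred_eq, ratAct] at h
    split_ifs at h with h1
    rw [natDegree_map]
    omega

lemma coeff_map_sub_C_mul_map_eq_zero (hd : 0 < d) (hdeg : max p.natDegree q.natDegree = d)
    {c : A} (h : ratAct p q A none = some c) :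
    (p.map (algebraMap K A) - C c * q.map (algebraMap K A)).coeff d = 0 := by
  simp only [ratAct] at h
  simp only [coeff_sub, coeff_C_mul, coeff_map]
  split_ifs at h with h1 h2
  · rw [← Option.some_injective _ h, coeff_eq_zero_of_natDegree_lt (by omega)]
    simp
  · have hp : p.coeff d = p.leadingCoeff := by rw [leadingCoeff]; congr; omega
    have hq : q.coeff d = q.leadingCoeff := by rw [leadingCoeff]; congr; omega
    have hq0 : q.leadingCoeff ≠ 0 := leadingCoeff_ne_zero.2 <| by
      rintro rfl
      simp only [natDegree_zero, max_eq_left (Nat.zero_le _)] at h1 hdeg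
      omega
    rw [← Option.some_injective _ h, hp, hq, map_div₀,
      div_mul_cancel₀ _ ((_root_.map_ne_zero _).2 hq0), sub_self]

lemma encard_ratAct_fiber_some_le (hd : 0 < d) (hf : IsCoprime p q)
    (hdeg : max p.natDegree q.natDegree = d) (c : A) :
    {x : P1 A | ratAct p q A x = some c}.encard ≤ d := by
  set r := p.map (algebraMap K A) - C c * q.map (algebraMap K A)
  have hr : r ≠ 0 := by
    intro h
    have hpq := sub_eq_zero.1 h
    have hq0 := natDegree_eq_zero_of_isUnit <|
      (hf.map_algebraMap A).isUnit_of_dvd' ⟨C c, by rw [hpq, mul_comm]⟩ dvd_rfl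
    have hp0 := (congrArg natDegree hpq).trans_le (natDegree_C_mul_le _ _)
    simp only [natDegree_map] at hq0 hp0
    omega
  have hrd : r.natDegree ≤ d := (natDegree_sub_le _ _).trans <| max_le
    (by rw [natDegree_map]; omega) ((natDegree_C_mul_le _ _).trans (by rw [natDegree_map]; omega))
  refine encard_le_of_subset_roots hr hrd (fun t ht => ?_) fun h => ?_
  · simp only [Set.mem_ofPred_eq, ratAct] at ht
    split_ifs at ht with h0
    simp only [r, eval_sub, eval_mul, eval_C, eval_map_algebraMap]
    rw [← Option.some_injective _ ht, div_mul_cancel₀ _ h0, sub_self]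
  · refine lt_of_le_of_ne hrd fun hr' => hr (leadingCoeff_eq_zero.1 ?_)
    rw [leadingCoeff, hr']
    exact coeff_map_sub_C_mul_map_eq_zero hd hdeg h

lemma encard_ratAct_fiber_le (hd : 0 < d) (hf : IsCoprime p q)
    (hdeg : max p.natDegree q.natDegree = d) : ∀ γ : P1 A, {x | ratAct p q A x = γ}.encard ≤ d
  | none => encard_ratAct_fiber_none_le hd hf hdeg
  | some c => encard_ratAct_fiber_some_le hd hf hdeg c

end RationalMap

theorem hasDim_arbGal_zero_of_hasDim_iterate {K : Type*} [Field K]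
    {φ : P1 (Kbar K) → P1 (Kbar K)} {d m : ℕ} (hd : 2 ≤ d) (hm : 0 < m)
    (hφ : ∀ σ, Function.Commute (galP1 σ) φ) (hfib : ∀ y, {x | φ x = y}.encard ≤ d)
    {a : P1 (Kbar K)} (hfix : ∀ ℓ < m, ∀ β, φ^[ℓ] β = a → ∀ σ, galP1 σ β = β)
    (hsmall : ∀ ℓ < m, ∀ β, φ^[ℓ] β = a → HasDim (d ^ m) (arbGal galP1 ⊥ (φ^[m]) β) 0) :
    HasDim d (arbGal galP1 ⊥ φ a) 0 := by
  have hD : 2 ≤ d ^ m := hd.trans (Nat.le_self_pow hm.ne' d)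
  have hφm : ∀ σ, Function.Commute (galP1 σ) (φ^[m]) := fun σ => (hφ σ).iterate_right m
  have hfibm := encard_iterate_fiber_le hfib m
  have := finite_preV hfib a
  have := finite_preV hfibm
  have := (finite_setOf_exists_iterate_eq hfib a m).fintype
  set U := {β | ∃ ℓ < m, φ^[ℓ] β = a}
  have hfixU : ∀ β : U, ∀ σ, galP1 σ β.1 = β.1 := fun ⟨β, ℓ, hℓ, hβ⟩ => hfix ℓ hℓ β hβ
  have hlim : ∀ β : U, Tendsto (dimRatio (d ^ m) (arbGal galP1 ⊥ (φ^[m]) β)) atTop (𝓝 0) :=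
    fun ⟨β, ℓ, hℓ, hβ⟩ => (hsmall ℓ hℓ β hβ).tendsto_dimRatio_arbGal hD hφm hfibm
  have hbound : ∀ n ≥ 1, dimRatio d (arbGal galP1 ⊥ φ a) n ≤
      d ^ (m + 1) * Real.log (d ^ m).factorial / Real.log d.factorial *
        ∑ β : U, dimRatio (d ^ m) (arbGal galP1 ⊥ (φ^[m]) β) (n / m + 1) := fun n hn =>
    dimRatio_le_mul_sum hd hm hn (levelCard_arbGal_le_prod hφ hm (Nat.lt_mul_div_succ n hm).le
      Subtype.val hfixU fun ℓ hℓ x hx => ⟨⟨x, ℓ, hℓ, hx⟩, rfl⟩)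
  refine hasDim_zero_of_tendsto <| tendsto_of_tendsto_of_tendsto_of_le_of_le' tendsto_const_nhds
    ?_ (.of_forall (dimRatio_nonneg d _)) (eventually_atTop.2 ⟨1, hbound⟩)
  simpa using ((tendsto_finsetSum _ fun β _ => (hlim β).comp
    ((tendsto_add_atTop_nat 1).comp (Nat.tendsto_div_const_atTop hm.ne'))).const_mul _)

theorem arboreal_iterate_small_criterion_general {K : Type*} [Field K] {d : ℕ}
    (hd : 2 ≤ d) (p q : Polynomial K) (hf : IsCoprime p q)
    (hdeg : max p.natDegree q.natDegree = d) (α : P1 K) (m : ℕ) (hm : 2 ≤ m)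
    (hUrat : ∀ ℓ, ℓ < m → ∀ β : P1 (Kbar K),
      (ratAct p q (Kbar K))^[ℓ] β = P1K α → β ∈ P1Rat (K := K) ⊥)
    (hsmall : ∀ ℓ, ℓ < m → ∀ β : P1 (Kbar K),
      (ratAct p q (Kbar K))^[ℓ] β = P1K α →
        HasDim (d ^ m) (arbGal (K := K) galP1 ⊥ ((ratAct p q (Kbar K))^[m]) β) 0) :
    HasDim d (arbGal (K := K) galP1 ⊥ (ratAct p q (Kbar K)) (P1K α)) 0 :=
  hasDim_arbGal_zero_of_hasDim_iterate hd (by omega) (galP1_commute_ratAct p q)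
    (encard_ratAct_fiber_le (by omega) hf hdeg)
    (fun ℓ hℓ β hβ => galP1_eq_self_of_mem_P1Rat (hUrat ℓ hℓ β hβ)) hsmall

theorem arboreal_iterate_small_criterion {K : Type*} [Field K] [NumberField K] {d : ℕ}
    (hd : 2 ≤ d) (p q : Polynomial K) (hf : IsCoprime p q)
    (hdeg : max p.natDegree q.natDegree = d) (α : P1 K) (m : ℕ) (hm : 2 ≤ m)
    (hUrat : ∀ ℓ, ℓ < m → ∀ β : P1 (Kbar K),
      (ratAct p q (Kbar K))^[ℓ] β = P1K α → β ∈ P1Rat (K := K) ⊥)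
    (hsmall : ∀ ℓ, ℓ < m → ∀ β : P1 (Kbar K),
      (ratAct p q (Kbar K))^[ℓ] β = P1K α →
        HasDim (d ^ m) (arbGal (K := K) galP1 ⊥ ((ratAct p q (Kbar K))^[m]) β) 0) :
    HasDim d (arbGal (K := K) galP1 ⊥ (ratAct p q (Kbar K)) (P1K α)) 0 :=
  arboreal_iterate_small_criterion_general hd p q hf hdeg α m hm hUrat hsmall
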